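/- arXiv:2212.12934 — 2 statements merged into one kernel-verified Lean document; each statement's English description precedes it below -/
import Mathlib

section
/- With 𝔪 = span{a⊗σx, b⊗σy, i·x_n, i·y_n : a,b ∈ su(2^{n-1})} and 𝔩 = span{c⊗σz, d⊗I, i·z_n : c,d ∈ su(2^{n-1})}, the commutator satisfies [𝔪,𝔪] ⊆ 𝔩. -/
open Matrix Complex
open scoped Kronecker

/-- The 2×2 Pauli matrices. -/
noncomputable def σx : Matrix (Fin 2) (Fin 2) ℂ := !![0, 1; 1, 0]
noncomputable def σy : Matrix (Fin 2) (Fin 2) ℂ := !![0, -I; I, 0]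
noncomputable def σz : Matrix (Fin 2) (Fin 2) ℂ := !![1, 0; 0, -1]

/-- `su ι`: traceless skew-Hermitian complex matrices indexed by `ι`. -/
def su (ι : Type*) [Fintype ι] [DecidableEq ι] : Set (Matrix ι ι ℂ) :=
  {A | Aᴴ = -A ∧ A.trace = 0}

/- ### Auxiliary lemmas -/

lemma pauli_xx : σx * σx = 1 := by
  ext i j
  fin_cases i <;> fin_cases j <;>
    simp [σx, Matrix.mul_apply, Fin.sum_univ_two, Matrix.one_apply]

lemma pauli_yy : σy * σy = 1 := by
  ext i j
  fin_cases i <;> fin_cases j <;>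
    simp [σy, Matrix.mul_apply, Fin.sum_univ_two, Matrix.one_apply]

lemma pauli_xy : σx * σy = I • σz := by
  ext i j
  fin_cases i <;> fin_cases j <;>
    simp [σx, σy, σz, Matrix.mul_apply, Fin.sum_univ_two]

lemma pauli_yx : σy * σx = (-I) • σz := by
  ext i j
  fin_cases i <;> fin_cases j <;>
    simp [σx, σy, σz, Matrix.mul_apply, Fin.sum_univ_two]

lemma sub_kronecker {l m n p : Type*} (A B : Matrix l m ℂ) (C : Matrix n p ℂ) :
    (A - B) ⊗ₖ C = A ⊗ₖ C - B ⊗ₖ C := by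
  ext ⟨i, j⟩ ⟨k, l⟩
  simp [Matrix.kroneckerMap_apply, sub_mul]

lemma su_comm_mem {ι : Type*} [Fintype ι] [DecidableEq ι] {a b : Matrix ι ι ℂ}
    (ha : a ∈ su ι) (hb : b ∈ su ι) : a * b - b * a ∈ su ι := by
  obtain ⟨ha1, ha2⟩ := ha
  obtain ⟨hb1, hb2⟩ := hb
  constructor
  · simp only [Matrix.conjTranspose_sub, Matrix.conjTranspose_mul, ha1, hb1,
      Matrix.neg_mul, Matrix.mul_neg, neg_neg, neg_sub]
  · simp [Matrix.trace_sub, Matrix.trace_mul_comm a b]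

lemma su_real_smul {ι : Type*} [Fintype ι] [DecidableEq ι] {a : Matrix ι ι ℂ}
    (r : ℝ) (ha : a ∈ su ι) : (r : ℂ) • a ∈ su ι := by
  obtain ⟨ha1, ha2⟩ := ha
  refine ⟨?_, ?_⟩
  · rw [Matrix.conjTranspose_smul, ha1]
    simp
  · simp [Matrix.trace_smul, ha2]

lemma trace_mul_real {ι : Type*} [Fintype ι] [DecidableEq ι] {a b : Matrix ι ι ℂ}
    (ha : aᴴ = -a) (hb : bᴴ = -b) : (((a * b).trace).re : ℂ) = (a * b).trace := by
  rw [← Complex.conj_eq_iff_re]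
  have h1 : star ((a * b).trace) = ((a * b)ᴴ).trace := (Matrix.trace_conjTranspose _).symm
  have h2 : (a * b)ᴴ = b * a := by
    rw [Matrix.conjTranspose_mul, ha, hb, Matrix.neg_mul, Matrix.mul_neg, neg_neg]
  calc (starRingEnd ℂ) ((a * b).trace) = star ((a * b).trace) := rfl
    _ = (b * a).trace := by rw [h1, h2]
    _ = (a * b).trace := Matrix.trace_mul_comm b a

/-- The corrected coefficient of `σz` coming from `[a ⊗ σx, b ⊗ σy]` lies in `su`. -/
lemma xy_su {n : ℕ} (hn : 0 < n) {a b : Matrix (Fin n) (Fin n) ℂ}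
    (ha : a ∈ su (Fin n)) (hb : b ∈ su (Fin n)) :
    I • (a * b + b * a) - ((2 * ((a * b).trace.re) / n : ℝ) : ℂ) • (I • 1)
      ∈ su (Fin n) := by
  obtain ⟨ha1, ha2⟩ := ha
  obtain ⟨hb1, hb2⟩ := hb
  have ht := trace_mul_real ha1 hb1
  constructor
  · have habH : (a * b + b * a)ᴴ = a * b + b * a := by
      simp only [Matrix.conjTranspose_add, Matrix.conjTranspose_mul, ha1, hb1,
        Matrix.neg_mul, Matrix.mul_neg, neg_neg]
      exact add_comm _ _
    have h1H : (1 : Matrix (Fin n) (Fin n) ℂ)ᴴ = 1 := Matrix.conjTranspose_one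
    simp only [Matrix.conjTranspose_sub, Matrix.conjTranspose_smul, habH, h1H,
      Complex.star_def, Complex.conj_I, Complex.conj_ofReal, neg_smul, neg_sub,
      neg_neg, neg_smul_neg]
    rw [smul_neg, sub_neg_eq_add]
    abel
  · have hN : (n : ℂ) ≠ 0 := by exact_mod_cast hn.ne'
    rw [Matrix.trace_sub, Matrix.trace_smul, Matrix.trace_smul, Matrix.trace_smul,
      Matrix.trace_add, Matrix.trace_one, Matrix.trace_mul_comm b a]
    push_cast
    rw [← ht]
    simp only [Fintype.card_fin, Complex.ofReal_re]
    field_simp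
    ring_nf
    simp [hN]

lemma real_smul_matrix {n p : Type*} (r : ℝ) (A : Matrix n p ℂ) :
    (r : ℂ) • A = r • A := by
  rw [← algebraMap_smul ℂ r A]
  rfl

/- ### Commutator computations on generators -/

section Comm

variable {ι : Type*} [Fintype ι] [DecidableEq ι]

lemma comm_xx (a b : Matrix ι ι ℂ) :
    (a ⊗ₖ σx) * (b ⊗ₖ σx) - (b ⊗ₖ σx) * (a ⊗ₖ σx) = (a * b - b * a) ⊗ₖ 1 := by
  rw [← Matrix.mul_kronecker_mul, ← Matrix.mul_kronecker_mul, pauli_xx, sub_kronecker]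

lemma comm_yy (a b : Matrix ι ι ℂ) :
    (a ⊗ₖ σy) * (b ⊗ₖ σy) - (b ⊗ₖ σy) * (a ⊗ₖ σy) = (a * b - b * a) ⊗ₖ 1 := by
  rw [← Matrix.mul_kronecker_mul, ← Matrix.mul_kronecker_mul, pauli_yy, sub_kronecker]

lemma comm_xy (a b : Matrix ι ι ℂ) :
    (a ⊗ₖ σx) * (b ⊗ₖ σy) - (b ⊗ₖ σy) * (a ⊗ₖ σx) = I • ((a * b + b * a) ⊗ₖ σz) := by
  rw [← Matrix.mul_kronecker_mul, ← Matrix.mul_kronecker_mul, pauli_xy, pauli_yx,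
    Matrix.kronecker_smul, Matrix.kronecker_smul, Matrix.add_kronecker]
  simp [smul_add, sub_neg_eq_add]

lemma comm_x_ix (a : Matrix ι ι ℂ) :
    (a ⊗ₖ σx) * (I • ((1 : Matrix ι ι ℂ) ⊗ₖ σx))
      - (I • ((1 : Matrix ι ι ℂ) ⊗ₖ σx)) * (a ⊗ₖ σx) = 0 := by
  rw [Matrix.mul_smul, Matrix.smul_mul, ← Matrix.mul_kronecker_mul,
    ← Matrix.mul_kronecker_mul, pauli_xx, mul_one, one_mul, sub_self]

lemma comm_y_iy (a : Matrix ι ι ℂ) :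
    (a ⊗ₖ σy) * (I • ((1 : Matrix ι ι ℂ) ⊗ₖ σy))
      - (I • ((1 : Matrix ι ι ℂ) ⊗ₖ σy)) * (a ⊗ₖ σy) = 0 := by
  rw [Matrix.mul_smul, Matrix.smul_mul, ← Matrix.mul_kronecker_mul,
    ← Matrix.mul_kronecker_mul, pauli_yy, mul_one, one_mul, sub_self]

lemma comm_x_iy (a : Matrix ι ι ℂ) :
    (a ⊗ₖ σx) * (I • ((1 : Matrix ι ι ℂ) ⊗ₖ σy))
      - (I • ((1 : Matrix ι ι ℂ) ⊗ₖ σy)) * (a ⊗ₖ σx)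
      = ((-2 : ℂ) • a) ⊗ₖ σz := by
  rw [Matrix.mul_smul, Matrix.smul_mul, ← Matrix.mul_kronecker_mul,
    ← Matrix.mul_kronecker_mul, pauli_xy, pauli_yx, mul_one, one_mul,
    Matrix.kronecker_smul, Matrix.kronecker_smul, Matrix.smul_kronecker]
  simp only [smul_smul]
  rw [← sub_smul]
  norm_num [Complex.I_mul_I]

lemma comm_y_ix (a : Matrix ι ι ℂ) :
    (a ⊗ₖ σy) * (I • ((1 : Matrix ι ι ℂ) ⊗ₖ σx))
      - (I • ((1 : Matrix ι ι ℂ) ⊗ₖ σx)) * (a ⊗ₖ σy)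
      = ((2 : ℂ) • a) ⊗ₖ σz := by
  rw [Matrix.mul_smul, Matrix.smul_mul, ← Matrix.mul_kronecker_mul,
    ← Matrix.mul_kronecker_mul, pauli_yx, pauli_xy, mul_one, one_mul,
    Matrix.kronecker_smul, Matrix.kronecker_smul, Matrix.smul_kronecker]
  simp only [smul_smul]
  rw [← sub_smul]
  norm_num [Complex.I_mul_I]

lemma comm_ix_iy :
    (I • ((1 : Matrix ι ι ℂ) ⊗ₖ σx)) * (I • ((1 : Matrix ι ι ℂ) ⊗ₖ σy))
      - (I • ((1 : Matrix ι ι ℂ) ⊗ₖ σy)) * (I • ((1 : Matrix ι ι ℂ) ⊗ₖ σx))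
      = (-2 : ℝ) • (I • ((1 : Matrix ι ι ℂ) ⊗ₖ σz)) := by
  rw [Matrix.mul_smul, Matrix.smul_mul, Matrix.mul_smul, Matrix.smul_mul,
    ← Matrix.mul_kronecker_mul, ← Matrix.mul_kronecker_mul, pauli_xy, pauli_yx,
    one_mul, Matrix.kronecker_smul, Matrix.kronecker_smul, ← real_smul_matrix]
  simp only [smul_smul]
  rw [← sub_smul]
  congr 1
  simp [Complex.I_mul_I]
  ring

end Comm

/-- With 𝔪 = span{a⊗σx, b⊗σy, i·x_n, i·y_n} and 𝔩 = span{c⊗σz, d⊗I, i·z_n}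
(a,b,c,d ∈ su(2^{n-1})), we have [𝔪, 𝔪] ⊆ 𝔩.  Here n = m + 1. -/
theorem stmt1 (m : ℕ)
    (mfr lfr : Submodule ℝ (Matrix (Fin (2 ^ m) × Fin 2) (Fin (2 ^ m) × Fin 2) ℂ))
    (hm : mfr = Submodule.span ℝ
      {M | (∃ a ∈ su (Fin (2 ^ m)), M = a ⊗ₖ σx) ∨
           (∃ b ∈ su (Fin (2 ^ m)), M = b ⊗ₖ σy) ∨
           M = Complex.I • ((1 : Matrix (Fin (2 ^ m)) (Fin (2 ^ m)) ℂ) ⊗ₖ σx) ∨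
           M = Complex.I • ((1 : Matrix (Fin (2 ^ m)) (Fin (2 ^ m)) ℂ) ⊗ₖ σy)})
    (hl : lfr = Submodule.span ℝ
      {M | (∃ c ∈ su (Fin (2 ^ m)), M = c ⊗ₖ σz) ∨
           (∃ d ∈ su (Fin (2 ^ m)), M = d ⊗ₖ (1 : Matrix (Fin 2) (Fin 2) ℂ)) ∨
           M = Complex.I • ((1 : Matrix (Fin (2 ^ m)) (Fin (2 ^ m)) ℂ) ⊗ₖ σz)}) :
    ∀ A ∈ mfr, ∀ B ∈ mfr, A * B - B * A ∈ lfr := by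
  have hn : 0 < 2 ^ m := Nat.pow_pos (by norm_num)
  -- membership helpers for 𝔩
  have memz : ∀ c ∈ su (Fin (2 ^ m)), c ⊗ₖ σz ∈ lfr := by
    intro c hc
    rw [hl]
    exact Submodule.subset_span (Or.inl ⟨c, hc, rfl⟩)
  have memid : ∀ d ∈ su (Fin (2 ^ m)), d ⊗ₖ (1 : Matrix (Fin 2) (Fin 2) ℂ) ∈ lfr := by
    intro d hd
    rw [hl]
    exact Submodule.subset_span (Or.inr (Or.inl ⟨d, hd, rfl⟩))
  have memiz : I • ((1 : Matrix (Fin (2 ^ m)) (Fin (2 ^ m)) ℂ) ⊗ₖ σz) ∈ lfr := by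
    rw [hl]
    exact Submodule.subset_span (Or.inr (Or.inr rfl))
  -- commutator of a generator of 𝔪 with a generator of 𝔪 lies in 𝔩
  set S : Set (Matrix (Fin (2 ^ m) × Fin 2) (Fin (2 ^ m) × Fin 2) ℂ) :=
      {M | (∃ a ∈ su (Fin (2 ^ m)), M = a ⊗ₖ σx) ∨
           (∃ b ∈ su (Fin (2 ^ m)), M = b ⊗ₖ σy) ∨
           M = Complex.I • ((1 : Matrix (Fin (2 ^ m)) (Fin (2 ^ m)) ℂ) ⊗ₖ σx) ∨
           M = Complex.I • ((1 : Matrix (Fin (2 ^ m)) (Fin (2 ^ m)) ℂ) ⊗ₖ σy)} with hS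
  have swap : ∀ X Y : Matrix (Fin (2 ^ m) × Fin 2) (Fin (2 ^ m) × Fin 2) ℂ,
      X * Y - Y * X ∈ lfr → Y * X - X * Y ∈ lfr := by
    intro X Y h
    have := lfr.neg_mem h
    rwa [neg_sub] at this
  -- the xy-type commutators
  have hxy : ∀ a ∈ su (Fin (2 ^ m)), ∀ b ∈ su (Fin (2 ^ m)),
      (a ⊗ₖ σx) * (b ⊗ₖ σy) - (b ⊗ₖ σy) * (a ⊗ₖ σx) ∈ lfr := by
    intro a ha b hb
    rw [comm_xy]
    set r : ℝ := 2 * ((a * b).trace.re) / (2 ^ m : ℕ) with hr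
    set c : Matrix (Fin (2 ^ m)) (Fin (2 ^ m)) ℂ :=
      I • (a * b + b * a) - (r : ℂ) • (I • 1) with hc
    have hcsu : c ∈ su (Fin (2 ^ m)) := xy_su hn ha hb
    have hdecomp : I • ((a * b + b * a) ⊗ₖ σz)
        = c ⊗ₖ σz + r • (I • ((1 : Matrix (Fin (2 ^ m)) (Fin (2 ^ m)) ℂ) ⊗ₖ σz)) := by
      rw [hc, sub_kronecker, Matrix.smul_kronecker, Matrix.smul_kronecker,
        Matrix.smul_kronecker, ← real_smul_matrix r]
      abel
    rw [hdecomp]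
    exact lfr.add_mem (memz c hcsu) (lfr.smul_mem r memiz)
  have key : ∀ A ∈ S, ∀ B ∈ S, A * B - B * A ∈ lfr := by
    have keyhalf : ∀ a ∈ su (Fin (2 ^ m)), ∀ B ∈ S, (a ⊗ₖ σx) * B - B * (a ⊗ₖ σx) ∈ lfr
        ∧ (a ⊗ₖ σy) * B - B * (a ⊗ₖ σy) ∈ lfr := by
      intro a ha B hB
      rcases hB with ⟨b, hb, rfl⟩ | ⟨b, hb, rfl⟩ | rfl | rfl
      · constructor
        · rw [comm_xx]
          exact memid _ (su_comm_mem ha hb)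
        · exact swap _ _ (hxy b hb a ha)
      · constructor
        · exact hxy a ha b hb
        · rw [comm_yy]
          exact memid _ (su_comm_mem ha hb)
      · constructor
        · rw [comm_x_ix]; exact lfr.zero_mem
        · rw [comm_y_ix]
          exact memz _ (by simpa using su_real_smul 2 ha)
      · constructor
        · rw [comm_x_iy]
          exact memz _ (by simpa using su_real_smul (-2) ha)
        · rw [comm_y_iy]; exact lfr.zero_mem
    intro A hA B hB
    rcases hA with ⟨a, ha, rfl⟩ | ⟨a, ha, rfl⟩ | rfl | rfl
    · exact (keyhalf a ha B hB).1
    · exact (keyhalf a ha B hB).2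
    · rcases hB with ⟨b, hb, rfl⟩ | ⟨b, hb, rfl⟩ | rfl | rfl
      · exact swap _ _ (keyhalf b hb _ (Or.inr (Or.inr (Or.inl rfl)))).1
      · exact swap _ _ (keyhalf b hb _ (Or.inr (Or.inr (Or.inl rfl)))).2
      · simp only [sub_self]; exact lfr.zero_mem
      · rw [comm_ix_iy]
        exact lfr.smul_mem (-2 : ℝ) memiz
    · rcases hB with ⟨b, hb, rfl⟩ | ⟨b, hb, rfl⟩ | rfl | rfl
      · exact swap _ _ (keyhalf b hb _ (Or.inr (Or.inr (Or.inr rfl)))).1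
      · exact swap _ _ (keyhalf b hb _ (Or.inr (Or.inr (Or.inr rfl)))).2
      · exact swap _ _ (by rw [comm_ix_iy]; exact lfr.smul_mem (-2 : ℝ) memiz)
      · simp only [sub_self]; exact lfr.zero_mem
  -- extend by bilinearity
  have step1 : ∀ A ∈ S, ∀ B ∈ mfr, A * B - B * A ∈ lfr := by
    intro A hA B hB
    rw [hm] at hB
    induction hB using Submodule.span_induction with
    | mem x hx => exact key A hA x hx
    | zero => simp only [mul_zero, zero_mul, sub_zero]; exact lfr.zero_mem
    | add x y hx hy px py =>
      have : A * (x + y) - (x + y) * A = (A * x - x * A) + (A * y - y * A) := by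
        noncomm_ring
      rw [this]; exact lfr.add_mem px py
    | smul r x hx px =>
      have : A * (r • x) - (r • x) * A = r • (A * x - x * A) := by
        rw [Matrix.mul_smul, Matrix.smul_mul, smul_sub]
      rw [this]; exact lfr.smul_mem r px
  intro A hA B hB
  rw [hm] at hA
  induction hA using Submodule.span_induction with
  | mem x hx => exact step1 x hx B hB
  | zero => simp only [zero_mul, mul_zero, sub_zero]; exact lfr.zero_mem
  | add x y hx hy px py =>
    have : (x + y) * B - B * (x + y) = (x * B - B * x) + (y * B - B * y) := by
      noncomm_ring
    rw [this]; exact lfr.add_mem px py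
  | smul r x hx px =>
    have : (r • x) * B - B * (r • x) = r • (x * B - B * x) := by
      rw [Matrix.mul_smul, Matrix.smul_mul, smul_sub]
    rw [this]; exact lfr.smul_mem r px
end

section
/- For any n ≥ 2, the span of {α ⊗ σx, i·x_n : α ∈ 𝔰(n−1)} is an abelian subalgebra of su(2^n), where 𝔰(n−1) is the commuting family generated recursively by 𝔞(2) = i{σx⊗σx, σy⊗σy, σz⊗σz} and 𝔰(k) = ∪_{i=2}^{k} 𝔞(i)⊗I^{⊗(k−i)}, 𝔞(n) = {α⊗σx, i·x_n : α ∈ 𝔰(n−1)}. -/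
open Matrix Complex
open scoped Kronecker

/-- Matrices on `n` qubits. -/
abbrev QMat (n : ℕ) := Matrix (Fin n → Fin 2) (Fin n → Fin 2) ℂ

/-- Kronecker product appending one qubit (the last one). -/
noncomputable def tens {n : ℕ} (A : QMat n) (B : Matrix (Fin 2) (Fin 2) ℂ) :
    QMat (n + 1) :=
  fun f g => A (Fin.init f) (Fin.init g) * B (f (Fin.last n)) (g (Fin.last n))

/-- The two-qubit matrix `P ⊗ Q`. -/
noncomputable def q2 (P Q : Matrix (Fin 2) (Fin 2) ℂ) : QMat 2 :=
  tens (tens (1 : QMat 0) P) Q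

/-- The recursively defined pair `(𝔞(m+2), 𝔰(m+2))` of Khaneja–Glaser:
𝔞(2) = 𝔰(2) = i{σx⊗σx, σy⊗σy, σz⊗σz},
𝔞(n+1) = {α⊗σx : α ∈ 𝔰(n)} ∪ {i·x_{n+1}},
𝔰(n+1) = {α⊗I : α ∈ 𝔰(n)} ∪ 𝔞(n+1)
(so that 𝔰(k) = ⋃_{i=2}^{k} 𝔞(i)⊗I^{⊗(k−i)}). -/
noncomputable def aS : (m : ℕ) → Set (QMat (m + 2)) × Set (QMat (m + 2))
  | 0 =>
    ({Complex.I • q2 σx σx, Complex.I • q2 σy σy, Complex.I • q2 σz σz},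
     {Complex.I • q2 σx σx, Complex.I • q2 σy σy, Complex.I • q2 σz σz})
  | (m + 1) =>
    let p := aS m
    let a : Set (QMat (m + 3)) :=
      (fun α => tens α σx) '' p.2 ∪ {Complex.I • tens (1 : QMat (m + 2)) σx}
    (a, (fun α => tens α (1 : Matrix (Fin 2) (Fin 2) ℂ)) '' p.2 ∪ a)

/-!
Every element of 𝔰(n+1) is a Kronecker product α ⊗ P with P ∈ {1, σx} and α either in 𝔰(n) or
the central matrix i·1, so pairwise commutation passes from 𝔰(n) to 𝔰(n+1); in the base case
σx, σy, σz pairwise anticommute, and tensoring two anticommuting pairs gives a commuting pair.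
Membership in su is inherited the same way, since α ⊗ P is skew-Hermitian when α is skew-Hermitian
and P Hermitian, and tr (α ⊗ P) = tr α · tr P. Both properties pass to the real span.
-/

section Tensor

variable {n : ℕ}

def qubitSplit (n : ℕ) : (Fin (n + 1) → Fin 2) ≃ (Fin n → Fin 2) × Fin 2 :=
  (Fin.snocEquiv fun _ => Fin 2).symm.trans (Equiv.prodComm _ _)

theorem tens_eq_submatrix_kronecker (A : QMat n) (P : Matrix (Fin 2) (Fin 2) ℂ) :
    tens A P = (A ⊗ₖ P).submatrix (qubitSplit n) (qubitSplit n) :=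
  rfl

theorem tens_mul (A B : QMat n) (P Q : Matrix (Fin 2) (Fin 2) ℂ) :
    tens A P * tens B Q = tens (A * B) (P * Q) := by
  simp only [tens_eq_submatrix_kronecker, submatrix_mul_equiv, mul_kronecker_mul]

theorem conjTranspose_tens (A : QMat n) (P : Matrix (Fin 2) (Fin 2) ℂ) :
    (tens A P)ᴴ = tens Aᴴ Pᴴ := by
  simp only [tens_eq_submatrix_kronecker, conjTranspose_submatrix, conjTranspose_kronecker]

theorem trace_tens (A : QMat n) (P : Matrix (Fin 2) (Fin 2) ℂ) :
    (tens A P).trace = A.trace * P.trace := by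
  rw [tens_eq_submatrix_kronecker, ← trace_kronecker]
  exact Fintype.sum_equiv (qubitSplit n) _ _ fun _ => rfl

theorem tens_smul_left (c : ℂ) (A : QMat n) (P : Matrix (Fin 2) (Fin 2) ℂ) :
    tens (c • A) P = c • tens A P := by
  ext f g
  simp only [tens, Matrix.smul_apply, smul_eq_mul, mul_assoc]

theorem tens_neg_left (A : QMat n) (P : Matrix (Fin 2) (Fin 2) ℂ) :
    tens (-A) P = -tens A P := by
  ext f g
  simp only [tens, Matrix.neg_apply, neg_mul]

theorem tens_neg_right (A : QMat n) (P : Matrix (Fin 2) (Fin 2) ℂ) :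
    tens A (-P) = -tens A P := by
  ext f g
  simp only [tens, Matrix.neg_apply, mul_neg]

theorem commute_tens {A B : QMat n} {P Q : Matrix (Fin 2) (Fin 2) ℂ}
    (hAB : Commute A B) (hPQ : Commute P Q) : Commute (tens A P) (tens B Q) := by
  rw [Commute, SemiconjBy, tens_mul, tens_mul, hAB.eq, hPQ.eq]

theorem commute_tens_of_anticommute {A B : QMat n} {P Q : Matrix (Fin 2) (Fin 2) ℂ}
    (hAB : A * B = -(B * A)) (hPQ : P * Q = -(Q * P)) : Commute (tens A P) (tens B Q) := by
  rw [Commute, SemiconjBy, tens_mul, tens_mul, hAB, hPQ, tens_neg_left, tens_neg_right, neg_neg]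

theorem commute_q2_of_anticommute {P Q : Matrix (Fin 2) (Fin 2) ℂ} (h : P * Q = -(Q * P)) :
    Commute (q2 P P) (q2 Q Q) :=
  commute_tens_of_anticommute (by rw [tens_mul, tens_mul, h, tens_neg_right, mul_one]) h

theorem forall_commute_image2_tens {s : Set (QMat n)} {t : Set (Matrix (Fin 2) (Fin 2) ℂ)}
    (hs : ∀ a ∈ s, ∀ b ∈ s, Commute a b) (ht : ∀ p ∈ t, ∀ q ∈ t, Commute p q) :
    ∀ x ∈ Set.image2 tens s t, ∀ y ∈ Set.image2 tens s t, Commute x y := by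
  rintro _ ⟨a, ha, p, hp, rfl⟩ _ ⟨b, hb, q, hq, rfl⟩
  exact commute_tens (hs a ha b hb) (ht p hp q hq)

end Tensor

theorem σx_conjTranspose : σxᴴ = σx := by
  ext i j; fin_cases i <;> fin_cases j <;> simp [σx]

theorem σy_conjTranspose : σyᴴ = σy := by
  ext i j; fin_cases i <;> fin_cases j <;> simp [σy]

theorem σz_conjTranspose : σzᴴ = σz := by
  ext i j; fin_cases i <;> fin_cases j <;> simp [σz]

theorem trace_σx : σx.trace = 0 := by simp [σx, trace_fin_two]

theorem trace_σy : σy.trace = 0 := by simp [σy, trace_fin_two]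

theorem trace_σz : σz.trace = 0 := by simp [σz, trace_fin_two]

theorem σx_mul_σy : σx * σy = -(σy * σx) := by
  ext i j; fin_cases i <;> fin_cases j <;> simp [σx, σy]

theorem σx_mul_σz : σx * σz = -(σz * σx) := by
  ext i j; fin_cases i <;> fin_cases j <;> simp [σx, σz]

theorem σy_mul_σz : σy * σz = -(σz * σy) := by
  ext i j; fin_cases i <;> fin_cases j <;> simp [σy, σz]

section SpecialUnitary

variable (ι : Type*) [Fintype ι] [DecidableEq ι]

def suSubmodule : Submodule ℝ (Matrix ι ι ℂ) where
  carrier := su ι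
  zero_mem' := ⟨by simp, trace_zero ι ℂ⟩
  add_mem' := by
    rintro A B ⟨hA, trA⟩ ⟨hB, trB⟩
    exact ⟨by rw [conjTranspose_add, hA, hB, neg_add], by rw [trace_add, trA, trB, add_zero]⟩
  smul_mem' := by
    rintro r A ⟨hA, trA⟩
    exact ⟨by rw [conjTranspose_smul, hA, star_trivial, smul_neg],
      by rw [trace_smul, trA, smul_zero]⟩

variable {ι}

theorem I_smul_mem_su {A : Matrix ι ι ℂ} (hA : Aᴴ = A) (trA : A.trace = 0) : I • A ∈ su ι :=
  ⟨by simp [conjTranspose_smul, hA], by rw [trace_smul, trA, smul_zero]⟩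

theorem tens_mem_su {n : ℕ} {A : QMat n} {P : Matrix (Fin 2) (Fin 2) ℂ}
    (hA : A ∈ su (Fin n → Fin 2)) (hP : Pᴴ = P) : tens A P ∈ su (Fin (n + 1) → Fin 2) :=
  ⟨by rw [conjTranspose_tens, hA.1, hP, tens_neg_left], by rw [trace_tens, hA.2, zero_mul]⟩

end SpecialUnitary

theorem commute_of_mem_span {R A : Type*} [CommSemiring R] [Semiring A] [Algebra R A]
    {s : Set A} (hs : ∀ a ∈ s, ∀ b ∈ s, Commute a b) {a b : A}
    (ha : a ∈ Submodule.span R s) (hb : b ∈ Submodule.span R s) : Commute a b :=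
  Algebra.commute_of_mem_adjoin_of_forall_mem_commute (Algebra.span_le_adjoin R s hb)
    fun b' hb' => (Algebra.commute_of_mem_adjoin_of_forall_mem_commute
      (Algebra.span_le_adjoin R s ha) (hs b' hb')).symm

theorem aS_fst_subset_snd (m : ℕ) : (aS m).1 ⊆ (aS m).2 := by
  cases m with
  | zero => exact subset_rfl
  | succ m => exact Set.subset_union_right

theorem aS_snd_subset_su (m : ℕ) : (aS m).2 ⊆ su (Fin (m + 2) → Fin 2) := by
  induction m with
  | zero =>
    have h {P : Matrix (Fin 2) (Fin 2) ℂ} (hP : Pᴴ = P) (trP : P.trace = 0) :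
        I • q2 P P ∈ su (Fin 2 → Fin 2) :=
      I_smul_mem_su (by simp only [q2, conjTranspose_tens, conjTranspose_one, hP])
        (by rw [q2, trace_tens, trP, mul_zero])
    rintro A (rfl | rfl | rfl)
    exacts [h σx_conjTranspose trace_σx, h σy_conjTranspose trace_σy,
      h σz_conjTranspose trace_σz]
  | succ m ih =>
    rintro A (⟨α, hα, rfl⟩ | ⟨α, hα, rfl⟩ | rfl)
    · exact tens_mem_su (ih hα) conjTranspose_one
    · exact tens_mem_su (ih hα) σx_conjTranspose
    · exact I_smul_mem_su (by rw [conjTranspose_tens, conjTranspose_one, σx_conjTranspose])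
        (by rw [trace_tens, trace_σx, mul_zero])

theorem aS_succ_snd_subset_image2 (m : ℕ) :
    (aS (m + 1)).2 ⊆ Set.image2 tens (insert (I • 1) (aS m).2) {1, σx} := by
  rintro _ (⟨α, hα, rfl⟩ | ⟨α, hα, rfl⟩ | rfl)
  · exact Set.mem_image2_of_mem (Set.mem_insert_of_mem _ hα) (Set.mem_insert _ _)
  · exact Set.mem_image2_of_mem (Set.mem_insert_of_mem _ hα) (Set.mem_insert_of_mem _ rfl)
  · rw [← tens_smul_left]
    exact Set.mem_image2_of_mem (Set.mem_insert _ _) (Set.mem_insert_of_mem _ rfl)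

theorem aS_snd_commute (m : ℕ) : ∀ a ∈ (aS m).2, ∀ b ∈ (aS m).2, Commute a b := by
  induction m with
  | zero =>
    have h {P Q : Matrix (Fin 2) (Fin 2) ℂ} (hPQ : P * Q = -(Q * P)) :
        Commute (I • q2 P P) (I • q2 Q Q) :=
      ((commute_q2_of_anticommute hPQ).smul_left I).smul_right I
    rintro a (rfl | rfl | rfl) b (rfl | rfl | rfl)
    exacts [Commute.refl _, h σx_mul_σy, h σx_mul_σz, (h σx_mul_σy).symm, Commute.refl _,
      h σy_mul_σz, (h σx_mul_σz).symm, (h σy_mul_σz).symm, Commute.refl _]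
  | succ m ih =>
    have hI (a : QMat (m + 2)) : Commute (I • 1) a := (Commute.one_left a).smul_left I
    have hs : ∀ a ∈ insert (I • 1) (aS m).2, ∀ b ∈ insert (I • 1) (aS m).2, Commute a b := by
      rintro a (rfl | ha) b (rfl | hb)
      exacts [Commute.refl _, hI b, (hI a).symm, ih a ha b hb]
    have ht : ∀ p ∈ ({1, σx} : Set (Matrix (Fin 2) (Fin 2) ℂ)), ∀ q ∈ ({1, σx} : Set _),
        Commute p q := by
      rintro p (rfl | rfl) q (rfl | rfl) <;> simp
    intro a ha b hb
    exact forall_commute_image2_tens hs ht a (aS_succ_snd_subset_image2 m ha) b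
      (aS_succ_snd_subset_image2 m hb)

/-- For any n ≥ 2 (written n = m + 2), the real span of
𝔞(n) = {α ⊗ σx, i·x_n : α ∈ 𝔰(n−1)} is an abelian subalgebra of su(2^n):
it consists of traceless skew-Hermitian matrices and all of its elements
pairwise commute. -/
theorem stmt5 (m : ℕ) :
    (↑(Submodule.span ℝ (aS m).1) : Set (QMat (m + 2))) ⊆ su (Fin (m + 2) → Fin 2) ∧
    ∀ A ∈ Submodule.span ℝ (aS m).1, ∀ B ∈ Submodule.span ℝ (aS m).1,
      A * B = B * A := by
  have h𝔞 : (aS m).1 ⊆ (aS m).2 := aS_fst_subset_snd m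
  refine ⟨Submodule.span_le (p := suSubmodule _) |>.mpr (h𝔞.trans (aS_snd_subset_su m)), ?_⟩
  intro A hA B hB
  refine (commute_of_mem_span (fun a ha b hb => ?_) hA hB).eq
  exact aS_snd_commute m a (h𝔞 ha) b (h𝔞 hb)
end
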